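/- arXiv:1604.04437 — 2 statements merged into one kernel-verified Lean document; each statement's English description precedes it below -/
import Mathlib

section
/- With A the quantum complete intersection as below, the space Der(A) of derivations of A has k-dimension p² + 1 + ((p−1)/e)². -/
/-!
Context: `A` is the quantum complete intersection
`A = k⟨x,y⟩/(x^p, y^p, yx − q·xy)` over a field `k` of odd prime characteristic `p`,
where `q ∈ k^×` has finite multiplicative order `e` with `2 ≤ e` and `e ∣ p − 1`.
`HH¹(A) = Der(A)/IDer(A)` is the first Hochschild cohomology of `A`, a Lie algebra
with bracket induced by `[f,g] = f∘g − g∘f`.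
-/

section HochschildPrelim

variable (k : Type*) [CommRing k] (A : Type*) [Ring A] [Algebra k A]

attribute [local instance 100] LieRing.ofAssociativeRing

/-- A derivation of the `k`-algebra `A`: a `k`-linear map satisfying the Leibniz rule. -/
def IsDeriv (f : Module.End k A) : Prop := ∀ a b : A, f (a * b) = a * f b + f a * b

/-- An inner derivation `[c, -] : a ↦ c*a - a*c`. -/
def IsInner (f : Module.End k A) : Prop := ∃ c : A, ∀ a : A, f a = c * a - a * c

/-- The Lie algebra `Der(A)` of derivations, as a Lie subalgebra of `End_k(A)`
(with the commutator bracket). -/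
def Der : LieSubalgebra k (Module.End k A) where
  carrier := {f | IsDeriv k A f}
  add_mem' := by
    intro f g hf hg
    intro a b
    simp only [LinearMap.add_apply, hf a b, hg a b]
    noncomm_ring
  zero_mem' := by intro a b; simp
  smul_mem' := by
    intro c f hf
    intro a b
    simp only [LinearMap.smul_apply, hf a b, smul_add, mul_smul_comm, smul_mul_assoc]
  lie_mem' := by
    intro f g hf hg
    intro a b
    rw [Ring.lie_def]
    simp only [LinearMap.sub_apply, Module.End.mul_apply]
    rw [hg a b, map_add, hf a (g b), hf (g a) b, hf a b, map_add, hg a (f b), hg (f a) b,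
      mul_sub, sub_mul]
    abel

/-- The inner derivations form a Lie ideal `IDer(A)` of `Der(A)`. -/
def IDer : LieIdeal k (Der k A) where
  carrier := {f | IsInner k A f.1}
  add_mem' := by
    rintro f g ⟨c, hc⟩ ⟨d, hd⟩
    refine ⟨c + d, fun a => ?_⟩
    show f.1 a + g.1 a = _
    rw [hc, hd]
    noncomm_ring
  zero_mem' := ⟨0, fun a => by simp⟩
  smul_mem' := by
    rintro t f ⟨c, hc⟩
    refine ⟨t • c, fun a => ?_⟩
    show t • f.1 a = _
    rw [hc, smul_sub, smul_mul_assoc, mul_smul_comm]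
  lie_mem := by
    rintro x m ⟨c, hc⟩
    refine ⟨x.1 c, fun a => ?_⟩
    have hx : IsDeriv k A x.1 := x.2
    have h : (↑(⁅x, m⁆ : Der k A) : Module.End k A) a = x.1 (m.1 a) - m.1 (x.1 a) := rfl
    rw [h, hc, hc, map_sub, hx c a, hx a c]
    abel

/-- The first Hochschild cohomology `HH¹(A) = Der(A)/IDer(A)`, as a quotient Lie algebra. -/
abbrev HH1 := Der k A ⧸ IDer k A

end HochschildPrelim

/-!
A derivation `f` of `A` is determined by `(u, v) = (f x, f y)`, and a pair `(u, v)` comes from a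
derivation iff it satisfies the linearizations of the three defining relations: `x ^ p = 0` and
`y ^ p = 0` give `∑_{s<p} x^s u x^(p-1-s) = 0` and `∑_{s<p} y^s v y^(p-1-s) = 0`, and
`y x = q x y` gives `y u + v x = q (u y + x v)`. Because `char k = p` and `q ^ (p - 1) = 1`, the
first two conditions follow from the third, so `Der(A)` is the kernel of the linear map
`(u, v) ↦ y u + v x - q (u y + x v)` on `A × A`. This map sends `(x^i y^j, 0)` and `(0, x^i y^j)`
to `(q^i - q) x^i y^(j+1)` and `(q^j - q) x^(i+1) y^j`, so its rank is the number of monomials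
`x^m y^n` hit with a nonzero coefficient: all of them except `1` and the `((p - 1) / e) ^ 2`
monomials with `m ≡ n ≡ 1 (mod e)`. Hence `dim Der(A) = 2 p² - (p² - 1 - ((p - 1) / e) ^ 2)`.
-/

open Finset

namespace IsDeriv

variable {k A : Type*} [CommRing k] [Ring A] [Algebra k A] {f g : Module.End k A}

theorem map_one (hf : IsDeriv k A f) : f 1 = 0 := by
  simpa using hf 1 1

theorem of_adjoin_eq_top {s : Set A} (hs : Algebra.adjoin k s = ⊤) (h1 : f 1 = 0)
    (hf : ∀ a ∈ s, ∀ c, f (a * c) = a * f c + f a * c) : IsDeriv k A f := by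
  let leibnizLeft : Subalgebra k A :=
    { carrier := {a | ∀ c, f (a * c) = a * f c + f a * c}
      mul_mem' := fun {a a'} (ha : ∀ c, _) (ha' : ∀ c, _) c => by
        rw [mul_assoc, ha, ha', ha a']
        noncomm_ring
      add_mem' := fun {a a'} (ha : ∀ c, _) (ha' : ∀ c, _) c => by
        rw [add_mul, map_add, ha, ha', map_add]
        noncomm_ring
      algebraMap_mem' := fun r c => by
        simp [Algebra.algebraMap_eq_smul_one, h1] }
  have hle : Algebra.adjoin k s ≤ leibnizLeft := Algebra.adjoin_le hf
  intro a c
  exact hle (hs ▸ Algebra.mem_top) c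

theorem ext_of_adjoin_eq_top {s : Set A} (hs : Algebra.adjoin k s = ⊤) (hf : IsDeriv k A f)
    (hg : IsDeriv k A g) (h : ∀ a ∈ s, f a = g a) : f = g := by
  let eqLocus : Subalgebra k A :=
    { carrier := {a | f a = g a}
      mul_mem' := fun {a a'} (ha : f a = g a) (ha' : f a' = g a') => by
        rw [Set.mem_ofPred_eq, hf, hg, ha, ha']
      add_mem' := fun {a a'} (ha : f a = g a) (ha' : f a' = g a') => by
        rw [Set.mem_ofPred_eq, map_add, map_add, ha, ha']
      algebraMap_mem' := fun r => by
        simp [Algebra.algebraMap_eq_smul_one, hf.map_one, hg.map_one] }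
  have hle : Algebra.adjoin k s ≤ eqLocus := Algebra.adjoin_le h
  exact LinearMap.ext fun a => hle (hs ▸ Algebra.mem_top)

end IsDeriv

section PowDeriv

variable (k : Type*) {A : Type*} [CommRing k] [Ring A] [Algebra k A]

/-- `powDeriv k a n u = ∑_{s < n} a ^ s * u * a ^ (n - 1 - s)`: the value at `a ^ n` of any
derivation sending `a` to `u`. -/
def powDeriv (a : A) : ℕ → Module.End k A
  | 0 => 0
  | n + 1 => LinearMap.mulLeft k a ∘ₗ powDeriv a n + LinearMap.mulRight k (a ^ n)

variable {k}

@[simp]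
theorem powDeriv_zero_apply (a u : A) : powDeriv k a 0 u = 0 := rfl

theorem powDeriv_succ_apply (a u : A) (n : ℕ) :
    powDeriv k a (n + 1) u = a * powDeriv k a n u + u * a ^ n := rfl

theorem IsDeriv.map_pow {f : Module.End k A} (hf : IsDeriv k A f) (a : A) (n : ℕ) :
    f (a ^ n) = powDeriv k a n (f a) := by
  induction n with
  | zero => simpa using hf.map_one
  | succ n ih => rw [pow_succ', hf, ih, powDeriv_succ_apply]

theorem powDeriv_apply_eq_zero_of_le {a u : A} {p n : ℕ} (ha : a ^ p = 0)
    (hu : powDeriv k a p u = 0) (hn : p ≤ n) : powDeriv k a n u = 0 := by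
  induction n, hn using Nat.le_induction with
  | base => exact hu
  | succ n hn ih => rw [powDeriv_succ_apply, ih, pow_eq_zero_of_le hn ha]; simp

end PowDeriv

section QCommuting

variable {k A : Type*} [CommRing k] [Ring A] [Algebra k A] {q : k} {x y : A}

theorem mul_pow_eq_smul (hyx : y * x = q • (x * y)) (i : ℕ) :
    y * x ^ i = q ^ i • (x ^ i * y) := by
  induction i with
  | zero => simp
  | succ i ih =>
    rw [pow_succ, ← mul_assoc, ih, smul_mul_assoc, mul_assoc, hyx, mul_smul_comm, smul_smul,
      ← mul_assoc, ← pow_succ, pow_succ]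

theorem pow_mul_pow_eq_smul (hyx : y * x = q • (x * y)) (i j : ℕ) :
    y ^ j * x ^ i = q ^ (i * j) • (x ^ i * y ^ j) := by
  induction j with
  | zero => simp
  | succ j ih =>
    rw [pow_succ', mul_assoc, ih, mul_smul_comm, ← mul_assoc, mul_pow_eq_smul hyx,
      smul_mul_assoc, smul_smul, mul_assoc, ← pow_succ', ← pow_add, mul_add_one]

theorem powDeriv_x_monomial (hyx : y * x = q • (x * y)) (i j n : ℕ) :
    powDeriv k x (n + 1) (x ^ i * y ^ j) =
      (∑ s ∈ range (n + 1), q ^ (j * s)) • (x ^ (i + n) * y ^ j) := by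
  induction n with
  | zero => simp [powDeriv_succ_apply]
  | succ n ih =>
    rw [powDeriv_succ_apply, ih, mul_smul_comm, ← mul_assoc, ← pow_succ', mul_assoc,
      pow_mul_pow_eq_smul hyx, mul_smul_comm, ← mul_assoc, ← pow_add, sum_range_succ _ (n + 1),
      add_smul]
    ring_nf

theorem powDeriv_y_monomial (hyx : y * x = q • (x * y)) (i j n : ℕ) :
    powDeriv k y (n + 1) (x ^ i * y ^ j) =
      (∑ s ∈ range (n + 1), q ^ (i * s)) • (x ^ i * y ^ (j + n)) := by
  induction n with
  | zero => simp [powDeriv_succ_apply]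
  | succ n ih =>
    rw [powDeriv_succ_apply, ih, mul_smul_comm, ← mul_assoc, mul_pow_eq_smul hyx, smul_mul_assoc,
      mul_assoc, ← pow_succ', smul_smul, mul_assoc, ← pow_add, sum_range_succ' _ (n + 1),
      add_smul]
    simp only [mul_add_one, pow_add, ← sum_mul, mul_zero, pow_zero, one_smul, ← add_assoc]

end QCommuting

section RelDeriv

variable {k A : Type*} [CommRing k] [Ring A] [Algebra k A] {q : k} {x y : A}

/-- The linearization of the relation `y * x - q • (x * y)` in the direction `(u, v)`. -/
def relDeriv (q : k) (x y : A) : A × A →ₗ[k] A :=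
  (LinearMap.mulLeft k y).coprod (LinearMap.mulRight k x) -
    q • (LinearMap.mulRight k y).coprod (LinearMap.mulLeft k x)

theorem relDeriv_apply (u v : A) :
    relDeriv q x y (u, v) = y * u + v * x - q • (u * y + x * v) := by
  simp [relDeriv]

theorem IsDeriv.relDeriv_apply_eq {f : Module.End k A} (hf : IsDeriv k A f) :
    relDeriv q x y (f x, f y) = f (y * x - q • (x * y)) := by
  rw [relDeriv_apply, map_sub, map_smul, hf, hf, add_comm (x * f y)]

theorem relDeriv_pow_eq_zero (hyx : y * x = q • (x * y)) {u v : A}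
    (huv : relDeriv q x y (u, v) = 0) (n : ℕ) :
    relDeriv (q ^ n) (x ^ n) y (powDeriv k x n u, v) = 0 := by
  have hyu : y * u = q • (u * y + x * v) - v * x := by
    rw [relDeriv_apply, sub_eq_zero] at huv
    exact eq_sub_of_add_eq huv
  rw [relDeriv_apply, sub_eq_zero]
  induction n with
  | zero => simp
  | succ n ih =>
    set P := powDeriv k x n u
    calc y * powDeriv k x (n + 1) u + v * x ^ (n + 1)
        = (y * x) * P + (y * u) * x ^ n + v * x * x ^ n := by
          rw [powDeriv_succ_apply, pow_succ']; noncomm_ring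
      _ = q • (x * (y * P + v * x ^ n)) + q • (u * (y * x ^ n)) := by
          rw [hyx, hyu]
          simp only [smul_mul_assoc, add_mul, sub_mul, mul_add, mul_assoc, smul_add]
          abel
      _ = q ^ (n + 1) • (powDeriv k x (n + 1) u * y + x ^ (n + 1) * v) := by
          rw [ih, mul_pow_eq_smul hyx, powDeriv_succ_apply, pow_succ']
          simp only [smul_add, mul_add, add_mul, mul_smul_comm, smul_smul, mul_assoc, pow_succ']
          module

theorem relDeriv_inl_monomial (hyx : y * x = q • (x * y)) (i j : ℕ) :
    relDeriv q x y (x ^ i * y ^ j, 0) = (q ^ i - q) • (x ^ i * y ^ (j + 1)) := by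
  rw [relDeriv_apply, ← mul_assoc, mul_pow_eq_smul hyx, smul_mul_assoc, mul_assoc, ← pow_succ',
    mul_assoc, ← pow_succ, sub_smul]
  simp

theorem relDeriv_inr_monomial (hyx : y * x = q • (x * y)) (i j : ℕ) :
    relDeriv q x y (0, x ^ i * y ^ j) = (q ^ j - q) • (x ^ (i + 1) * y ^ j) := by
  have hyjx : y ^ j * x = q ^ j • (x * y ^ j) := by simpa using pow_mul_pow_eq_smul hyx 1 j
  rw [relDeriv_apply, mul_assoc, hyjx, mul_smul_comm, ← mul_assoc, ← pow_succ, ← mul_assoc,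
    ← pow_succ', sub_smul]
  simp

end RelDeriv

/-- `b` is the monomial basis `x ^ i * y ^ j` (`i, j < p`) of the quantum complete intersection
`k⟨x, y⟩ / (x ^ p, y ^ p, y * x - q • (x * y))`. -/
structure IsQuantumCompleteIntersection {k A : Type*} [CommRing k] [Ring A] [Algebra k A]
    {p : ℕ} (b : Module.Basis (Fin p × Fin p) k A) (q : k) (x y : A) : Prop where
  pow_x : x ^ p = 0
  pow_y : y ^ p = 0
  comm : y * x = q • (x * y)
  basis_apply : ∀ t : Fin p × Fin p, b t = x ^ (t.1 : ℕ) * y ^ (t.2 : ℕ)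

namespace IsQuantumCompleteIntersection

variable {k A : Type*} [CommRing k] [Ring A] [Algebra k A] {p : ℕ}
  {b : Module.Basis (Fin p × Fin p) k A} {q : k} {x y : A}

theorem repr_monomial (h : IsQuantumCompleteIntersection b q x y) (i j : ℕ)
    (t : Fin p × Fin p) :
    b.repr (x ^ i * y ^ j) t = if i = t.1 ∧ j = t.2 then 1 else 0 := by
  rcases lt_or_ge i p with hi | hi
  · rcases lt_or_ge j p with hj | hj
    · rw [show x ^ i * y ^ j = b (⟨i, hi⟩, ⟨j, hj⟩) by rw [h.basis_apply], b.repr_self,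
        Finsupp.single_apply]
      simp [Prod.ext_iff, Fin.ext_iff, eq_comm]
    · rw [pow_eq_zero_of_le hj h.pow_y, if_neg (by omega)]
      simp
  · rw [pow_eq_zero_of_le hi h.pow_x, if_neg (by omega)]
    simp

theorem adjoin_eq_top (h : IsQuantumCompleteIntersection b q x y) :
    Algebra.adjoin k {x, y} = ⊤ := by
  refine eq_top_iff.mpr fun a _ => ?_
  have hspan :
      Submodule.span k (Set.range b) ≤ Subalgebra.toSubmodule (Algebra.adjoin k {x, y}) := by
    refine Submodule.span_le.mpr ?_
    rintro _ ⟨t, rfl⟩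
    rw [h.basis_apply]
    exact (Subalgebra.mem_toSubmodule _).mpr <|
      mul_mem (pow_mem (Algebra.subset_adjoin (by simp)) _)
        (pow_mem (Algebra.subset_adjoin (by simp)) _)
  exact hspan (b.mem_span a)

theorem exists_linearMap_monomial (h : IsQuantumCompleteIntersection b q x y) {u v : A}
    (hu : powDeriv k x p u = 0) (hv : powDeriv k y p v = 0) :
    ∃ f : Module.End k A, ∀ i j : ℕ,
      f (x ^ i * y ^ j) = powDeriv k x i u * y ^ j + x ^ i * powDeriv k y j v := by
  set f := b.constr k fun t =>
    powDeriv k x t.1 u * y ^ (t.2 : ℕ) + x ^ (t.1 : ℕ) * powDeriv k y t.2 v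
  refine ⟨f, fun i j => ?_⟩
  -- `hu` and `hv` extend the defining formula to exponents `≥ p`, where both sides vanish.
  rcases lt_or_ge i p with hi | hi
  · rcases lt_or_ge j p with hj | hj
    · simpa [h.basis_apply] using b.constr_basis k _ (⟨i, hi⟩, ⟨j, hj⟩)
    · simp [pow_eq_zero_of_le hj h.pow_y, powDeriv_apply_eq_zero_of_le h.pow_y hv hj]
  · simp [pow_eq_zero_of_le hi h.pow_x, powDeriv_apply_eq_zero_of_le h.pow_x hu hi]

theorem exists_isDeriv (h : IsQuantumCompleteIntersection b q x y) {u v : A}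
    (hu : powDeriv k x p u = 0) (hv : powDeriv k y p v = 0) (huv : relDeriv q x y (u, v) = 0) :
    ∃ f : Module.End k A, IsDeriv k A f ∧ f x = u ∧ f y = v := by
  obtain ⟨f, hmonomial⟩ := h.exists_linearMap_monomial hu hv
  have hfx : f x = u := by simpa [powDeriv_succ_apply] using hmonomial 1 0
  have hfy : f y = v := by simpa [powDeriv_succ_apply] using hmonomial 0 1
  have hleibniz {a : A}
      (ha : ∀ i j : ℕ, f (a * (x ^ i * y ^ j)) = a * f (x ^ i * y ^ j) + f a * (x ^ i * y ^ j))
      (c : A) : f (a * c) = a * f c + f a * c := by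
    have hext : f ∘ₗ LinearMap.mulLeft k a =
        LinearMap.mulLeft k a ∘ₗ f + LinearMap.mulLeft k (f a) :=
      b.ext fun t => by simpa [h.basis_apply] using ha t.1 t.2
    simpa using LinearMap.congr_fun hext c
  have hf1 : f 1 = 0 := by simpa using hmonomial 0 0
  refine ⟨f, IsDeriv.of_adjoin_eq_top h.adjoin_eq_top hf1 ?_, hfx, hfy⟩
  simp only [Set.mem_insert_iff, Set.mem_singleton_iff, forall_eq_or_imp, forall_eq]
  refine ⟨hleibniz fun i j => ?_, hleibniz fun i j => ?_⟩
  · rw [hfx, ← mul_assoc, ← pow_succ', hmonomial, hmonomial, powDeriv_succ_apply, pow_succ']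
    noncomm_ring
  · rw [hfy, ← mul_assoc, mul_pow_eq_smul h.comm, smul_mul_assoc, mul_assoc, ← pow_succ',
      map_smul, hmonomial, hmonomial, powDeriv_succ_apply]
    set P := powDeriv k x i u
    set Q := powDeriv k y j v
    have hP : y * P + v * x ^ i = q ^ i • (P * y + x ^ i * v) := by
      have := relDeriv_pow_eq_zero h.comm huv i
      rwa [relDeriv_apply, sub_eq_zero] at this
    symm
    calc y * (P * y ^ j + x ^ i * Q) + v * (x ^ i * y ^ j)
        = (y * P + v * x ^ i) * y ^ j + (y * x ^ i) * Q := by noncomm_ring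
      _ = q ^ i • ((P * y + x ^ i * v) * y ^ j + (x ^ i * y) * Q) := by
          rw [hP, mul_pow_eq_smul h.comm, smul_mul_assoc, smul_mul_assoc, smul_add]
      _ = q ^ i • (P * y ^ (j + 1) + x ^ i * (y * Q + v * y ^ j)) := by
          rw [pow_succ']
          noncomm_ring

theorem powDeriv_x_eq_zero (h : IsQuantumCompleteIntersection b q x y) (hp : (p : k) = 0)
    (hqp : q ^ (p - 1) = 1) {u : A}
    (hu : ∀ t : Fin p × Fin p, (t.1 : ℕ) = 0 → (t.2 : ℕ) + 1 < p → b.repr u t = 0) :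
    powDeriv k x p u = 0 := by
  cases p with
  | zero => rfl
  | succ n =>
    rw [← b.sum_repr u, map_sum]
    refine sum_eq_zero fun t _ => ?_
    rw [map_smul, h.basis_apply, powDeriv_x_monomial h.comm]
    by_cases ht1 : (t.1 : ℕ) = 0
    · by_cases ht2 : (t.2 : ℕ) + 1 < n + 1
      · rw [hu t ht1 ht2, zero_smul]
      · have hsum : ∑ s ∈ range (n + 1), q ^ ((t.2 : ℕ) * s) = 0 := by
          simp_all [show (t.2 : ℕ) = n by omega, pow_mul]
        rw [hsum, zero_smul, smul_zero]
    · rw [pow_eq_zero_of_le (by omega) h.pow_x]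
      simp

theorem powDeriv_y_eq_zero (h : IsQuantumCompleteIntersection b q x y) (hp : (p : k) = 0)
    (hqp : q ^ (p - 1) = 1) {v : A}
    (hv : ∀ t : Fin p × Fin p, (t.2 : ℕ) = 0 → (t.1 : ℕ) + 1 < p → b.repr v t = 0) :
    powDeriv k y p v = 0 := by
  cases p with
  | zero => rfl
  | succ n =>
    rw [← b.sum_repr v, map_sum]
    refine sum_eq_zero fun t _ => ?_
    rw [map_smul, h.basis_apply, powDeriv_y_monomial h.comm]
    by_cases ht2 : (t.2 : ℕ) = 0
    · by_cases ht1 : (t.1 : ℕ) + 1 < n + 1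
      · rw [hv t ht2 ht1, zero_smul]
      · have hsum : ∑ s ∈ range (n + 1), q ^ ((t.1 : ℕ) * s) = 0 := by
          simp_all [show (t.1 : ℕ) = n by omega, pow_mul]
        rw [hsum, zero_smul, smul_zero]
    · rw [pow_eq_zero_of_le (by omega) h.pow_y]
      simp

end IsQuantumCompleteIntersection

open Classical in
/-- `x ^ m * y ^ n` is `relDeriv q x y` of `(x ^ m * y ^ (n - 1), 0)` up to the factor `q ^ m - q`,
and of `(0, x ^ (m - 1) * y ^ n)` up to the factor `q ^ n - q`. -/
noncomputable def relDerivRangeIndex {k : Type*} [Monoid k] (q : k) (p : ℕ) :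
    Finset (Fin p × Fin p) :=
  {t | 1 ≤ (t.2 : ℕ) ∧ q ^ (t.1 : ℕ) ≠ q ∨ 1 ≤ (t.1 : ℕ) ∧ q ^ (t.2 : ℕ) ≠ q}

namespace IsQuantumCompleteIntersection

variable {k A : Type*} [Field k] [Ring A] [Algebra k A] {p : ℕ}
  {b : Module.Basis (Fin p × Fin p) k A} {q : k} {x y : A}

theorem repr_fst_eq_zero_of_relDeriv_eq_zero (h : IsQuantumCompleteIntersection b q x y)
    (hq1 : q ≠ 1) {u v : A}
    (huv : relDeriv q x y (u, v) = 0) (t : Fin p × Fin p) (ht1 : (t.1 : ℕ) = 0)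
    (ht2 : (t.2 : ℕ) + 1 < p) : b.repr u t = 0 := by
  have hcoeff : b.coord (t.1, ⟨t.2 + 1, ht2⟩) ∘ₗ relDeriv q x y =
      (1 - q) • (b.coord t ∘ₗ LinearMap.fst k A A) := by
    refine LinearMap.prod_ext (b.ext fun r => ?_) (b.ext fun r => ?_)
    · simp only [LinearMap.comp_apply, LinearMap.inl_apply, LinearMap.smul_apply,
        LinearMap.fst_apply, Module.Basis.coord_apply, h.basis_apply, relDeriv_inl_monomial h.comm,
        map_smul, h.repr_monomial, smul_eq_mul]
      simp only [ht1, Nat.add_right_cancel_iff]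
      split_ifs with hr
      · rw [hr.1, pow_zero]
      · simp only [mul_zero]
    · simp only [LinearMap.comp_apply, LinearMap.inr_apply, LinearMap.smul_apply,
        LinearMap.fst_apply, Module.Basis.coord_apply, h.basis_apply, relDeriv_inr_monomial h.comm,
        map_smul, h.repr_monomial, smul_eq_mul]
      rw [ht1, if_neg (by omega)]
      simp
  have := LinearMap.congr_fun hcoeff (u, v)
  simp only [LinearMap.comp_apply, huv, map_zero, LinearMap.smul_apply, LinearMap.fst_apply,
    Module.Basis.coord_apply, smul_eq_mul] at this
  exact (mul_eq_zero.mp this.symm).resolve_left (sub_ne_zero.mpr hq1.symm)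

theorem repr_snd_eq_zero_of_relDeriv_eq_zero (h : IsQuantumCompleteIntersection b q x y)
    (hq1 : q ≠ 1) {u v : A}
    (huv : relDeriv q x y (u, v) = 0) (t : Fin p × Fin p) (ht2 : (t.2 : ℕ) = 0)
    (ht1 : (t.1 : ℕ) + 1 < p) : b.repr v t = 0 := by
  have hcoeff : b.coord (⟨t.1 + 1, ht1⟩, t.2) ∘ₗ relDeriv q x y =
      (1 - q) • (b.coord t ∘ₗ LinearMap.snd k A A) := by
    refine LinearMap.prod_ext (b.ext fun r => ?_) (b.ext fun r => ?_)
    · simp only [LinearMap.comp_apply, LinearMap.inl_apply, LinearMap.smul_apply,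
        LinearMap.snd_apply, Module.Basis.coord_apply, h.basis_apply, relDeriv_inl_monomial h.comm,
        map_smul, h.repr_monomial, smul_eq_mul]
      rw [ht2, if_neg (by omega)]
      simp
    · simp only [LinearMap.comp_apply, LinearMap.inr_apply, LinearMap.smul_apply,
        LinearMap.snd_apply, Module.Basis.coord_apply, h.basis_apply, relDeriv_inr_monomial h.comm,
        map_smul, h.repr_monomial, smul_eq_mul]
      simp only [ht2, Nat.add_right_cancel_iff]
      split_ifs with hr
      · rw [hr.2, pow_zero]
      · simp only [mul_zero]
  have := LinearMap.congr_fun hcoeff (u, v)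
  simp only [LinearMap.comp_apply, huv, map_zero, LinearMap.smul_apply, LinearMap.snd_apply,
    Module.Basis.coord_apply, smul_eq_mul] at this
  exact (mul_eq_zero.mp this.symm).resolve_left (sub_ne_zero.mpr hq1.symm)

theorem smul_monomial_mem_span (h : IsQuantumCompleteIntersection b q x y) {c : k} {i j : ℕ}
    (hij : c ≠ 0 → ∀ (hi : i < p) (hj : j < p),
      ((⟨i, hi⟩, ⟨j, hj⟩) : Fin p × Fin p) ∈ relDerivRangeIndex q p) :
    c • (x ^ i * y ^ j) ∈ Submodule.span k (b '' relDerivRangeIndex q p) := by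
  rcases eq_or_ne c 0 with rfl | hc
  · simp
  rcases lt_or_ge i p with hi | hi
  · rcases lt_or_ge j p with hj | hj
    · rw [show x ^ i * y ^ j = b (⟨i, hi⟩, ⟨j, hj⟩) by rw [h.basis_apply]]
      exact Submodule.smul_mem _ _ (Submodule.subset_span ⟨_, hij hc hi hj, rfl⟩)
    · simp [pow_eq_zero_of_le hj h.pow_y]
  · simp [pow_eq_zero_of_le hi h.pow_x]

theorem range_relDeriv (h : IsQuantumCompleteIntersection b q x y) :
    LinearMap.range (relDeriv q x y) = Submodule.span k (b '' relDerivRangeIndex q p) := by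
  refine le_antisymm ?_ (Submodule.span_le.mpr ?_)
  · rw [LinearMap.range_eq_map, ← (b.prod b).span_eq, Submodule.map_span, Submodule.span_le]
    rintro _ ⟨_, ⟨r | r, rfl⟩, rfl⟩
    · rw [Module.Basis.prod_apply, Sum.elim_inl, Function.comp_apply, LinearMap.inl_apply,
        h.basis_apply, relDeriv_inl_monomial h.comm]
      refine h.smul_monomial_mem_span fun hc _ _ => ?_
      simpa [relDerivRangeIndex, sub_eq_zero] using Or.inl hc
    · rw [Module.Basis.prod_apply, Sum.elim_inr, Function.comp_apply, LinearMap.inr_apply,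
        h.basis_apply, relDeriv_inr_monomial h.comm]
      refine h.smul_monomial_mem_span fun hc _ _ => ?_
      simpa [relDerivRangeIndex, sub_eq_zero] using Or.inr hc
  · rintro _ ⟨t, ht, rfl⟩
    simp only [relDerivRangeIndex, coe_filter, mem_univ, true_and, Set.mem_ofPred_eq] at ht
    rcases ht with ⟨ht2, hq⟩ | ⟨ht1, hq⟩
    · refine ⟨(q ^ (t.1 : ℕ) - q)⁻¹ • (x ^ (t.1 : ℕ) * y ^ ((t.2 : ℕ) - 1), 0), ?_⟩
      rw [map_smul, relDeriv_inl_monomial h.comm,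
        Nat.sub_add_cancel ht2, inv_smul_smul₀ (sub_ne_zero.mpr hq), h.basis_apply]
    · refine ⟨(q ^ (t.2 : ℕ) - q)⁻¹ • (0, x ^ ((t.1 : ℕ) - 1) * y ^ (t.2 : ℕ)), ?_⟩
      rw [map_smul, relDeriv_inr_monomial h.comm, Nat.sub_add_cancel ht1,
        inv_smul_smul₀ (sub_ne_zero.mpr hq), h.basis_apply]

theorem finrank_range_relDeriv (h : IsQuantumCompleteIntersection b q x y) :
    Module.finrank k (LinearMap.range (relDeriv q x y)) = #(relDerivRangeIndex q p) := by
  rw [h.range_relDeriv, Set.image_eq_range]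
  exact (finrank_span_eq_card (b.linearIndependent.comp _ Subtype.val_injective)).trans (by simp)

theorem finrank_der_eq_finrank_ker (h : IsQuantumCompleteIntersection b q x y)
    (hp : (p : k) = 0) (hq1 : q ≠ 1) (hqp : q ^ (p - 1) = 1) :
    Module.finrank k (Der k A) = Module.finrank k (LinearMap.ker (relDeriv q x y)) := by
  let eval : Der k A →ₗ[k] A × A :=
    { toFun f := (f.1 x, f.1 y)
      map_add' _ _ := rfl
      map_smul' _ _ := rfl }
  have heval_inj : Function.Injective eval := fun f g hfg =>
    Subtype.ext <| IsDeriv.ext_of_adjoin_eq_top h.adjoin_eq_top f.2 g.2 <| by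
      rintro a (rfl | rfl)
      exacts [congr_arg Prod.fst hfg, congr_arg Prod.snd hfg]
  have heval_range : LinearMap.range eval = LinearMap.ker (relDeriv q x y) := by
    ext w
    constructor
    · rintro ⟨f, rfl⟩
      exact (IsDeriv.relDeriv_apply_eq f.2).trans (by rw [h.comm, sub_self, map_zero])
    · obtain ⟨u, v⟩ := w
      intro huv
      obtain ⟨f, hf, rfl, rfl⟩ := h.exists_isDeriv
        (h.powDeriv_x_eq_zero hp hqp (h.repr_fst_eq_zero_of_relDeriv_eq_zero hq1 huv))
        (h.powDeriv_y_eq_zero hp hqp (h.repr_snd_eq_zero_of_relDeriv_eq_zero hq1 huv)) huv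
      exact ⟨⟨f, hf⟩, rfl⟩
  rw [← heval_range]
  exact (LinearEquiv.ofInjective eval heval_inj).finrank_eq

end IsQuantumCompleteIntersection

section Counting

variable {k : Type*} [Monoid k] {q : k} {e p : ℕ}

theorem card_filter_pow_eq_self [DecidableEq k] (hq : orderOf q = e) (he : 2 ≤ e)
    (hediv : e ∣ p - 1) (hp : 0 < p) : #{m : Fin p | q ^ (m : ℕ) = q} = (p - 1) / e := by
  have hiff (m : ℕ) : q ^ m = q ↔ m ≡ 1 [MOD e] := by
    rw [← hq, ← (orderOf_pos_iff.mp (by omega)).pow_eq_pow_iff_modEq, pow_one]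
  obtain ⟨c, hc⟩ := hediv
  calc #{m : Fin p | q ^ (m : ℕ) = q} = #{m ∈ range p | m ≡ 1 [MOD e]} := by
        simp only [card_filter, hiff]
        exact Fin.sum_univ_eq_sum_range (fun m => if m ≡ 1 [MOD e] then 1 else 0) p
    _ = (p - 1) / e := by
        rw [← Nat.count_eq_card_filter_range, Nat.count_modEq_card _ (by omega),
          show p = 1 + e * c by omega, Nat.add_mul_div_left _ _ (by omega),
          Nat.add_mul_mod_self_left, Nat.mod_eq_of_lt (by omega)]
        simp [Nat.mul_div_cancel_left _ (show 0 < e by omega), show 1 < e by omega]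

theorem compl_relDerivRangeIndex [DecidableEq k] (hq1 : q ≠ 1) (hp : 0 < p) :
    (relDerivRangeIndex q p)ᶜ = insert (⟨0, hp⟩, ⟨0, hp⟩)
      (({m | q ^ (m : ℕ) = q} : Finset (Fin p)) ×ˢ
        ({m | q ^ (m : ℕ) = q} : Finset (Fin p))) := by
  have hpos {m : ℕ} (hm : q ^ m = q) : 1 ≤ m := by
    by_contra h0
    rw [show m = 0 by omega, pow_zero] at hm
    exact hq1 hm.symm
  ext ⟨m, n⟩
  simp only [relDerivRangeIndex, mem_compl, mem_filter, mem_univ, true_and, mem_insert,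
    mem_product, Prod.ext_iff, Fin.ext_iff]
  constructor
  · intro h
    by_cases hm : (m : ℕ) = 0
    · have hn : (n : ℕ) = 0 := by
        by_contra hn
        exact h (Or.inl ⟨by omega, by rw [hm, pow_zero]; exact hq1.symm⟩)
      exact Or.inl ⟨hm, hn⟩
    · have hn : q ^ (n : ℕ) = q := by
        by_contra hn
        exact h (Or.inr ⟨by omega, hn⟩)
      refine Or.inr ⟨?_, hn⟩
      by_contra hm'
      exact h (Or.inl ⟨hpos hn, hm'⟩)
  · rintro (⟨hm, hn⟩ | ⟨hm, hn⟩) (⟨_, h⟩ | ⟨_, h⟩)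
    · simp_all
    · simp_all
    · exact h hm
    · exact h hn

theorem card_relDerivRangeIndex (hq : orderOf q = e) (he : 2 ≤ e) (hediv : e ∣ p - 1)
    (hp : 0 < p) : #(relDerivRangeIndex q p) + 1 + ((p - 1) / e) ^ 2 = p ^ 2 := by
  classical
  have hq1 : q ≠ 1 := fun h => by rw [← orderOf_eq_one_iff, hq] at h; omega
  have h00 : ((⟨0, hp⟩, ⟨0, hp⟩) : Fin p × Fin p) ∉
      ({m | q ^ (m : ℕ) = q} : Finset (Fin p)) ×ˢ
        ({m | q ^ (m : ℕ) = q} : Finset (Fin p)) := by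
    simpa [mem_product] using hq1.symm
  calc #(relDerivRangeIndex q p) + 1 + ((p - 1) / e) ^ 2
      = #(relDerivRangeIndex q p) + #(relDerivRangeIndex q p)ᶜ := by
        rw [compl_relDerivRangeIndex hq1 hp, card_insert_of_notMem h00, card_product,
          card_filter_pow_eq_self hq he hediv hp]
        ring
    _ = p ^ 2 := by
        rw [card_add_card_compl, Fintype.card_prod, Fintype.card_fin, sq]

end Counting

theorem dim_derivations_quantum_complete_intersection_general
    (k : Type*) [Field k] (p e : ℕ) (q : k)
    (hp : p.Prime) (hchar : CharP k p)
    (hq : orderOf q = e) (he : 2 ≤ e) (hediv : e ∣ p - 1)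
    (A : Type*) [Ring A] [Algebra k A] (x y : A)
    (hx : x ^ p = 0) (hy : y ^ p = 0) (hyx : y * x = q • (x * y))
    (b : Module.Basis (Fin p × Fin p) k A)
    (hb : ∀ ij : Fin p × Fin p, b ij = x ^ (ij.1 : ℕ) * y ^ (ij.2 : ℕ)) :
    Module.finrank k ↥(Der k A) = p ^ 2 + 1 + ((p - 1) / e) ^ 2 := by
  have hA : IsQuantumCompleteIntersection b q x y := ⟨hx, hy, hyx, hb⟩
  have hq1 : q ≠ 1 := fun h => by rw [← orderOf_eq_one_iff, hq] at h; omega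
  have hqp : q ^ (p - 1) = 1 := orderOf_dvd_iff_pow_eq_one.mp (hq ▸ hediv)
  have : Module.Finite k A := .of_basis b
  have hrank := (relDeriv q x y).finrank_range_add_finrank_ker
  rw [hA.finrank_range_relDeriv, Module.finrank_prod, Module.finrank_eq_card_basis b,
    Fintype.card_prod, Fintype.card_fin] at hrank
  have hcount := card_relDerivRangeIndex hq he hediv hp.pos
  rw [hA.finrank_der_eq_finrank_ker (CharP.cast_eq_zero k p) hq1 hqp]
  linarith

/-- Lemma: `dim_k Der(A) = p² + 1 + ((p−1)/e)²` for the quantum complete intersection. -/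
theorem dim_derivations_quantum_complete_intersection
    (k : Type*) [Field k] (p e : ℕ) (q : k)
    (hp : p.Prime) (hodd : Odd p) (hchar : CharP k p)
    (hq : orderOf q = e) (he : 2 ≤ e) (hediv : e ∣ p - 1)
    (A : Type*) [Ring A] [Algebra k A] (x y : A)
    (hx : x ^ p = 0) (hy : y ^ p = 0) (hyx : y * x = q • (x * y))
    (b : Module.Basis (Fin p × Fin p) k A)
    (hb : ∀ ij : Fin p × Fin p, b ij = x ^ (ij.1 : ℕ) * y ^ (ij.2 : ℕ)) :
    Module.finrank k ↥(Der k A) = p ^ 2 + 1 + ((p - 1) / e) ^ 2 :=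
  dim_derivations_quantum_complete_intersection_general k p e q hp hchar hq he hediv A x y hx hy hyx
    b hb
end

section
/- Let (f_n)_{n≥0} be the sequence of polynomials in ℤ[X] defined by f_0 = 2, f_1 = X, and f_{n+1} = X·f_n − f_{n−1} for n ≥ 1 (so f_n(u) = 2·T_n(u/2), where T_n is the n-th Chebyshev polynomial of the first kind; f_n is monic of degree n for n ≥ 1). Then for every prime p, all coefficients of f_p except the leading coefficient are divisible by p; equivalently, the image of f_p in (ℤ/pℤ)[X] is X^p. -/
open Polynomial

/-- The normalised Chebyshev polynomials `f_n(u) = 2·T_n(u/2)`, defined by `f_0 = 2`,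
`f_1 = X` and `f_{n+1} = X·f_n − f_{n−1}`, satisfy: for every prime `p`, all coefficients
of `f_p` except the leading one are divisible by `p`; equivalently the image of `f_p` in
`(ℤ/pℤ)[X]` is `X^p`. -/
theorem normalised_chebyshev_prime_reduction
    (f : ℕ → Polynomial ℤ) (h0 : f 0 = 2) (h1 : f 1 = X)
    (hrec : ∀ n : ℕ, 1 ≤ n → f (n + 1) = X * f n - f (n - 1))
    (p : ℕ) (hp : p.Prime) :
    (∀ i < p, (p : ℤ) ∣ (f p).coeff i) ∧
    Polynomial.map (Int.castRingHom (ZMod p)) (f p) = X ^ p := by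
  have hf : ∀ n, f n = dickson 1 (1 : ℤ) n := by
    intro n
    induction n using Nat.strong_induction_on with
    | _ n ih =>
      match n with
      | 0 => rw [h0, dickson_zero]; norm_num
      | 1 => simpa [dickson] using h1
      | (m + 2) =>
        rw [hrec (m + 1) (Nat.le_add_left 1 m), dickson_add_two,
          show m + 1 - 1 = m from rfl, ih (m + 1) (by omega), ih m (by omega)]
        simp
  haveI : Fact p.Prime := ⟨hp⟩
  have hmap : Polynomial.map (Int.castRingHom (ZMod p)) (f p) = X ^ p := by
    rw [hf, map_dickson]
    simpa using dickson_one_one_zmod_p p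
  refine ⟨?_, hmap⟩
  intro i hi
  have := congrArg (fun q => Polynomial.coeff q i) hmap
  simp only [coeff_map, coeff_X_pow, if_neg (Nat.ne_of_lt hi)] at this
  exact (ZMod.intCast_zmod_eq_zero_iff_dvd _ _).mp this
end
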